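/- arXiv:2404.10379 — 11 statements merged into one kernel-verified Lean document; each statement's English description precedes it below -/
import Mathlib

section
/- Let G be a finite graph and let A_1, A_2, ..., A_s be maximum independent sets of G. Then |A_1 ∩ A_2 ∩ ... ∩ A_s| + |A_1 ∪ A_2 ∪ ... ∪ A_s| ≥ 2·α(G), where α(G) is the independence number of G. -/
/-- `A` is an independent set of `G`, as a finset. -/
def IsIndep {V : Type*} (G : SimpleGraph V) (A : Finset V) : Prop :=
  ∀ a ∈ A, ∀ b ∈ A, ¬ G.Adj a b

/-- `A` is a maximum independent set of `G`. -/
def IsMaxIndep {V : Type*} [Fintype V] (G : SimpleGraph V) (A : Finset V) : Prop :=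
  IsIndep G A ∧ ∀ B : Finset V, IsIndep G B → B.card ≤ A.card

open Classical in
/-- Key lemma: if `A` is a maximum independent set and `K` is independent, then the
number of vertices of `K` outside `A` is at most the number of vertices of `A`
adjacent to some vertex of `K`. -/
lemma key_lemma {V : Type*} [Fintype V] [DecidableEq V] (G : SimpleGraph V)
    (A K : Finset V) (hA : IsMaxIndep G A) (hK : IsIndep G K) :
    (K \ A).card ≤ (A.filter (fun a => ∃ k ∈ K, G.Adj k a)).card := by
  classical
  set NK : Finset V := A.filter (fun a => ∃ k ∈ K, G.Adj k a) with hNK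
  set S : Finset V := (A \ NK) ∪ K with hS
  have hSindep : IsIndep G S := by
    intro x hx y hy hadj
    simp only [hS, Finset.mem_union, Finset.mem_sdiff] at hx hy
    rcases hx with ⟨hxA, hxN⟩ | hxK
    · rcases hy with ⟨hyA, _⟩ | hyK
      · exact hA.1 x hxA y hyA hadj
      · exact hxN (by simp only [hNK, Finset.mem_filter]; exact ⟨hxA, y, hyK, hadj.symm⟩)
    · rcases hy with ⟨hyA, hyN⟩ | hyK
      · exact hyN (by simp only [hNK, Finset.mem_filter]; exact ⟨hyA, x, hxK, hadj⟩)
      · exact hK x hxK y hyK hadj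
  have hcard : S.card ≤ A.card := hA.2 S hSindep
  have hsub : (A \ NK) ∪ (K \ A) ⊆ S := by
    apply Finset.union_subset
    · exact Finset.subset_union_left
    · exact (Finset.sdiff_subset).trans Finset.subset_union_right
  have hdisj : Disjoint (A \ NK) (K \ A) := by
    apply Finset.disjoint_left.mpr
    intro x hx hx'
    exact (Finset.mem_sdiff.mp hx').2 (Finset.mem_sdiff.mp hx).1
  have h1 : (A \ NK).card + (K \ A).card ≤ A.card := by
    rw [← Finset.card_union_of_disjoint hdisj]
    exact (Finset.card_le_card hsub).trans hcard
  have h2 : (A \ NK).card = A.card - NK.card := by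
    apply Finset.card_sdiff_of_subset
    exact Finset.filter_subset _ _
  have h3 : NK.card ≤ A.card := Finset.card_le_card (Finset.filter_subset _ _)
  omega

/-- Hajnal's inequality: for maximum independent sets `A 0, …, A (s-1)`,
`|⋂ A i| + |⋃ A i| ≥ 2 α(G)`. -/
theorem hajnal_inequality {V : Type*} [Fintype V] [DecidableEq V] (G : SimpleGraph V)
    (s : ℕ) (hs : 0 < s) (A : Fin s → Finset V) (hA : ∀ i, IsMaxIndep G (A i)) :
    2 * (A ⟨0, hs⟩).card ≤ (Finset.univ.inf A).card + (Finset.univ.sup A).card := by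
  classical
  set α := (A ⟨0, hs⟩).card with hα
  have hsame : ∀ i, (A i).card = α := fun i =>
    le_antisymm ((hA ⟨0, hs⟩).2 _ (hA i).1) ((hA i).2 _ (hA ⟨0, hs⟩).1)
  -- general claim over nonempty finsets of indices
  have main : ∀ t : Finset (Fin s), t.Nonempty →
      2 * α ≤ (t.inf A).card + (t.sup A).card := by
    intro t ht
    induction ht using Finset.Nonempty.cons_induction with
    | singleton i =>
      simp [hsame i]; omega
    | cons i t hit ht IH =>
      rw [Finset.inf_cons, Finset.sup_cons]
      set K := t.inf A with hK
      set U := t.sup A with hU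
      obtain ⟨j, hj⟩ := ht
      have hKj : K ⊆ A j := Finset.inf_le hj
      have hjU : A j ⊆ U := Finset.le_sup hj
      have hKindep : IsIndep G K := fun a ha b hb =>
        (hA j).1 a (hKj ha) b (hKj hb)
      -- vertices of A i adjacent to K are outside U
      have hNsub : (A i).filter (fun a => ∃ k ∈ K, G.Adj k a) ⊆ A i \ U := by
        intro a ha
        simp only [Finset.mem_filter] at ha
        obtain ⟨haA, k, hkK, hadj⟩ := ha
        rw [Finset.mem_sdiff]
        refine ⟨haA, ?_⟩
        intro haU
        obtain ⟨j, hj, haj⟩ := Finset.mem_sup.mp (haU : a ∈ t.sup A)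
        have hKj' : K ⊆ A j := Finset.inf_le hj
        exact (hA j).1 k (hKj' hkK) a haj hadj
      have hkey : (K \ A i).card ≤ (A i \ U).card :=
        (key_lemma G (A i) K (hA i) hKindep).trans (Finset.card_le_card hNsub)
      have e1 : (K \ A i).card + (K ∩ A i).card = K.card :=
        Finset.card_sdiff_add_card_inter K (A i)
      have e2 : (A i \ U).card + U.card = (A i ∪ U).card :=
        Finset.card_sdiff_add_card (A i) U
      have e3 : (A i ⊓ K).card = (K ∩ A i).card := by
        rw [Finset.inf_eq_inter, Finset.inter_comm]
      have e4 : (A i ⊔ U).card = (A i ∪ U).card := by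
        rw [Finset.sup_eq_union]
      omega
  haveI : Nonempty (Fin s) := Fin.pos_iff_nonempty.mp hs
  have := main Finset.univ Finset.univ_nonempty
  omega
end

section
/- Let G be a finite graph on n vertices with α(G) > n/2. Then the intersection of all maximum independent sets of G is nonempty; in particular some single vertex hits every maximum independent set. -/
lemma indep_subset {V : Type*} (G : SimpleGraph V) {A B : Finset V}
    (h : IsIndep G A) (hBA : B ⊆ A) : IsIndep G B :=
  fun a ha b hb => h a (hBA ha) b (hBA hb)

/-- Key expansion lemma: if `A` is a maximum independent set, `I` is independent and
all neighbors of `I` lie outside `U`, then `|I \ A| ≤ |A \ U|`. -/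
lemma key_lemma_s1 {V : Type*} [Fintype V] [DecidableEq V] (G : SimpleGraph V)
    {A I U : Finset V} (hA : IsMaxIndep G A) (hI : IsIndep G I)
    (hN : ∀ v ∈ I, ∀ w, G.Adj v w → w ∉ U) :
    (I \ A).card ≤ (A \ U).card := by
  classical
  set S := I \ A with hSdef
  set NS := A.filter (fun a => ∃ s ∈ S, G.Adj s a) with hNSdef
  have hNSsub : NS ⊆ A := Finset.filter_subset _ _
  have hdisj : Disjoint (A \ NS) S := by
    rw [Finset.disjoint_left]
    intro a ha haS
    have : a ∈ A := (Finset.mem_sdiff.mp ha).1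
    exact (Finset.mem_sdiff.mp haS).2 this
  have hindep : IsIndep G ((A \ NS) ∪ S) := by
    intro a ha b hb hadj
    rcases Finset.mem_union.mp ha with ha' | ha' <;>
      rcases Finset.mem_union.mp hb with hb' | hb'
    · exact hA.1 a (Finset.sdiff_subset ha') b (Finset.sdiff_subset hb') hadj
    · exact (Finset.mem_sdiff.mp ha').2
        (Finset.mem_filter.mpr ⟨(Finset.mem_sdiff.mp ha').1, b, hb', hadj.symm⟩)
    · exact (Finset.mem_sdiff.mp hb').2
        (Finset.mem_filter.mpr ⟨(Finset.mem_sdiff.mp hb').1, a, ha', hadj⟩)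
    · exact hI a (Finset.sdiff_subset ha') b (Finset.sdiff_subset hb') hadj
  have hcard := hA.2 _ hindep
  have h1 : ((A \ NS) ∪ S).card = (A \ NS).card + S.card :=
    Finset.card_union_of_disjoint hdisj
  have h2 : (A \ NS).card = A.card - NS.card := Finset.card_sdiff_of_subset hNSsub
  have h3 : NS.card ≤ A.card := Finset.card_le_card hNSsub
  have h4 : NS ⊆ A \ U := by
    intro a haNS
    obtain ⟨haA, s, hsS, hadj⟩ := Finset.mem_filter.mp haNS
    have hsI : s ∈ I := (Finset.mem_sdiff.mp hsS).1
    exact Finset.mem_sdiff.mpr ⟨haA, hN s hsI a hadj⟩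
  have h5 : NS.card ≤ (A \ U).card := Finset.card_le_card h4
  omega

/-- Hajnal-type lemma: for a nonempty family of maximum independent sets,
`2α ≤ |⋂ 𝒜| + |⋃ 𝒜|`. -/
lemma hajnal {V : Type*} [Fintype V] [DecidableEq V] (G : SimpleGraph V)
    (A₀ : Finset V) (hA₀ : IsMaxIndep G A₀) :
    ∀ 𝒜 : Finset (Finset V), (∀ A ∈ 𝒜, IsMaxIndep G A) → 𝒜.Nonempty →
      2 * A₀.card ≤ (𝒜.inf id).card + (𝒜.sup id).card := by
  intro 𝒜
  induction 𝒜 using Finset.cons_induction with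
  | empty => intro _ h; exact absurd h (by simp)
  | cons A 𝒜 hnot IH =>
    intro hall _
    have hA : IsMaxIndep G A := hall A (Finset.mem_cons_self _ _)
    have hAcard : A.card = A₀.card := le_antisymm (hA₀.2 A hA.1) (hA.2 A₀ hA₀.1)
    rw [Finset.inf_cons, Finset.sup_cons]
    rcases 𝒜.eq_empty_or_nonempty with rfl | hne
    · simp [hAcard, two_mul]
    · have hall' : ∀ B ∈ 𝒜, IsMaxIndep G B := fun B hB => hall B (Finset.mem_cons_of_mem hB)
      have hIH := IH hall' hne
      set I := 𝒜.inf id with hIdef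
      set U := 𝒜.sup id with hUdef
      obtain ⟨A₁, hA₁⟩ := hne
      have hIsub : I ⊆ A₁ := Finset.le_iff_subset.mp (Finset.inf_le hA₁)
      have hIindep : IsIndep G I := indep_subset G (hall' A₁ hA₁).1 hIsub
      have hN : ∀ v ∈ I, ∀ w, G.Adj v w → w ∉ U := by
        intro v hv w hadj hw
        obtain ⟨B, hB, hwB⟩ := Finset.mem_sup.mp hw
        have hvB : v ∈ B := Finset.le_iff_subset.mp (Finset.inf_le hB) hv
        exact (hall' B hB).1 v hvB w hwB hadj
      have hkey := key_lemma_s1 G hA hIindep hN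
      have e1 : (I ∩ A).card + (I \ A).card = I.card := Finset.card_inter_add_card_sdiff I A
      have e2 : (A \ U).card + U.card = (A ∪ U).card := Finset.card_sdiff_add_card A U
      have e3 : (id A ⊓ I) = I ∩ A := by rw [Finset.inf_eq_inter, id, Finset.inter_comm]
      have e4 : (id A ⊔ U) = A ∪ U := by rw [Finset.sup_eq_union, id]
      rw [e3, e4]
      omega

/-- If `α(G) > n/2` then all maximum independent sets share a common vertex;
in particular a single vertex hits every maximum independent set. -/
theorem common_vertex_of_large_indep {V : Type*} [Fintype V] [DecidableEq V]
    (G : SimpleGraph V) (A₀ : Finset V) (hA₀ : IsMaxIndep G A₀)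
    (hbig : Fintype.card V < 2 * A₀.card) :
    ∃ v : V, ∀ A : Finset V, IsMaxIndep G A → v ∈ A := by
  classical
  set 𝒜 : Finset (Finset V) := Finset.univ.filter (fun A => IsMaxIndep G A) with h𝒜
  have hmem : ∀ A : Finset V, IsMaxIndep G A → A ∈ 𝒜 := by
    intro A hA; simp [h𝒜, hA]
  have hall : ∀ A ∈ 𝒜, IsMaxIndep G A := by
    intro A hA; simpa [h𝒜] using hA
  have hne : 𝒜.Nonempty := ⟨A₀, hmem A₀ hA₀⟩
  have hh := hajnal G A₀ hA₀ 𝒜 hall hne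
  have hsup : (𝒜.sup id).card ≤ Fintype.card V := Finset.card_le_univ _
  have hpos : 0 < (𝒜.inf id).card := by omega
  obtain ⟨v, hv⟩ := Finset.card_pos.mp hpos
  exact ⟨v, fun A hA => Finset.le_iff_subset.mp (Finset.inf_le (hmem A hA)) hv⟩
end

section
/- Let G be a finite bipartite graph. Then h(G) ≤ 2, i.e., there exist at most two vertices which together intersect every maximum independent set of G. -/
/-- For a finite bipartite graph `G`, `h(G) ≤ 2`: at most two vertices suffice to
hit every maximum independent set. -/
theorem bipartite_hitting_two {V : Type*} [Fintype V] [DecidableEq V] [Nonempty V]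
    (G : SimpleGraph V) (hbip : G.Colorable 2) :
    ∃ T : Finset V, T.card ≤ 2 ∧
      ∀ A : Finset V, IsMaxIndep G A → (A ∩ T).Nonempty := by
  classical
  by_cases hex : ∃ A : Finset V, IsMaxIndep G A
  swap
  · exact ⟨{Classical.arbitrary V}, by simp, fun A hA => absurd ⟨A, hA⟩ hex⟩
  obtain ⟨A₀, hA₀⟩ := hex
  set n := Fintype.card V with hn
  set α := A₀.card with hα
  have hAeq : ∀ A : Finset V, IsMaxIndep G A → A.card = α :=
    fun A hA => le_antisymm (hA₀.2 A hA.1) (hA.2 A₀ hA₀.1)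
  obtain ⟨C⟩ := hbip
  have fin2 : ∀ x : Fin 2, x ≠ 0 → x = 1 := by decide
  set X : Finset V := Finset.univ.filter (fun v => C v = 0) with hX
  set Y : Finset V := Finset.univ.filter (fun v => C v ≠ 0) with hY
  have hXY : Disjoint X Y := by
    rw [Finset.disjoint_left]
    intro a haX haY
    rw [hX, Finset.mem_filter] at haX
    rw [hY, Finset.mem_filter] at haY
    exact haY.2 haX.2
  have hXuY : X ∪ Y = Finset.univ := by
    ext v
    simp only [hX, hY, Finset.mem_union, Finset.mem_filter, Finset.mem_univ, true_and]
    tauto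
  have hncard : X.card + Y.card = n := by
    rw [← Finset.card_union_of_disjoint hXY, hXuY, hn, Finset.card_univ]
  have hYindep : IsIndep G Y := by
    intro a ha b hb hadj
    rw [hY, Finset.mem_filter] at ha hb
    exact C.valid hadj ((fin2 _ ha.2).trans (fin2 _ hb.2).symm)
  have hYα : Y.card ≤ α := hA₀.2 Y hYindep
  set d := α - Y.card with hdd
  have hd : Y.card + d = α := Nat.add_sub_cancel' hYα
  set N : V → Finset V := fun v => Finset.univ.filter (G.Adj v) with hN
  -- Hall system with d dummy vertices
  set t : ↥X → Finset (V ⊕ Fin d) := fun x =>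
    (N x.1).map ⟨Sum.inl, Sum.inl_injective⟩ ∪
      (Finset.univ : Finset (Fin d)).map ⟨Sum.inr, Sum.inr_injective⟩ with ht
  have hC0 : ∀ x : ↥X, C x.1 = 0 := by
    intro x
    have hx : x.1 ∈ Finset.filter (fun v => C v = 0) Finset.univ := x.2
    exact (Finset.mem_filter.mp hx).2
  have hHall : ∀ s : Finset ↥X, s.card ≤ (s.biUnion t).card := by
    intro s
    rcases s.eq_empty_or_nonempty with rfl | ⟨x₁, hx₁⟩
    · simp
    set Ns : Finset V := s.biUnion (fun x => N x.1) with hNs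
    -- the independent set witnessing the deficiency bound
    set B : Finset V := s.image (fun x => x.1) ∪ (Y \ Ns) with hB
    have hBindep : IsIndep G B := by
      intro a ha b hb hadj
      rw [hB, Finset.mem_union] at ha hb
      have hmem : ∀ x ∈ s, ∀ c ∈ Y \ Ns, ¬ G.Adj (x : ↥X).1 c := by
        intro x hx c hc hadj'
        rw [Finset.mem_sdiff] at hc
        exact hc.2 (Finset.mem_biUnion.mpr ⟨x, hx, by
          rw [hN]; exact Finset.mem_filter.mpr ⟨Finset.mem_univ _, hadj'⟩⟩)
      rcases ha with ha | ha <;> rcases hb with hb | hb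
      · obtain ⟨x, hx, rfl⟩ := Finset.mem_image.mp ha
        obtain ⟨y, hy, rfl⟩ := Finset.mem_image.mp hb
        exact C.valid hadj ((hC0 x).trans (hC0 y).symm)
      · obtain ⟨x, hx, rfl⟩ := Finset.mem_image.mp ha
        exact hmem x hx b hb hadj
      · obtain ⟨y, hy, rfl⟩ := Finset.mem_image.mp hb
        exact hmem y hy a ha hadj.symm
      · exact hYindep a (Finset.mem_sdiff.mp ha).1 b (Finset.mem_sdiff.mp hb).1 hadj
    have hBcard : B.card = s.card + (Y \ Ns).card := by
      rw [hB, Finset.card_union_of_disjoint, Finset.card_image_of_injective _ Subtype.val_injective]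
      rw [Finset.disjoint_left]
      intro a ha ha'
      obtain ⟨x, hx, rfl⟩ := Finset.mem_image.mp ha
      have := Finset.disjoint_left.mp hXY x.2
      exact this (Finset.mem_sdiff.mp ha').1
    have hBα : B.card ≤ α := hA₀.2 B hBindep
    have hYsplit : Y.card ≤ (Y \ Ns).card + Ns.card := by
      rw [Finset.card_sdiff_add_card]
      exact Finset.card_le_card Finset.subset_union_left
    -- lower bound on the Hall image
    have himg : (Ns.map ⟨Sum.inl, Sum.inl_injective⟩ ∪
        (Finset.univ : Finset (Fin d)).map ⟨Sum.inr, Sum.inr_injective⟩) ⊆ s.biUnion t := by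
      intro a ha
      rw [Finset.mem_union] at ha
      rcases ha with ha | ha
      · obtain ⟨y, hy, rfl⟩ := Finset.mem_map.mp ha
        obtain ⟨x, hx, hyx⟩ := Finset.mem_biUnion.mp hy
        exact Finset.mem_biUnion.mpr ⟨x, hx, Finset.mem_union_left _
          (Finset.mem_map.mpr ⟨y, hyx, rfl⟩)⟩
      · exact Finset.mem_biUnion.mpr ⟨x₁, hx₁, Finset.mem_union_right _ ha⟩
    have hcard2 : Ns.card + d ≤ (s.biUnion t).card := by
      have := Finset.card_le_card himg
      rwa [Finset.card_union_of_disjoint (by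
        rw [Finset.disjoint_left]
        rintro a ha hb
        obtain ⟨y, -, rfl⟩ := Finset.mem_map.mp ha
        obtain ⟨z, -, hz⟩ := Finset.mem_map.mp hb
        exact Sum.inl_ne_inr hz.symm), Finset.card_map, Finset.card_map,
        Finset.card_univ, Fintype.card_fin] at this
    have : s.card + Y.card ≤ α + Ns.card := by
      calc s.card + Y.card ≤ s.card + ((Y \ Ns).card + Ns.card) := by omega
        _ = B.card + Ns.card := by rw [hBcard]; ring
        _ ≤ α + Ns.card := by omega
    omega
  obtain ⟨F, hFinj, hFt⟩ := (Finset.all_card_le_biUnion_card_iff_exists_injective t).mp hHall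
  set m : ↥X → V := fun x => Sum.elim id (fun _ => x.1) (F x) with hm
  set X₀ : Finset ↥X := Finset.univ.filter (fun x => (F x).isLeft) with hX₀
  have hmF : ∀ x ∈ X₀, F x = Sum.inl (m x) ∧ G.Adj x.1 (m x) := by
    intro x hx
    rw [hX₀, Finset.mem_filter] at hx
    rcases hFx : F x with y | j
    · have hmx : m x = y := by rw [hm]; simp [hFx]
      have := hFt x
      rw [hFx, ht] at this
      rw [Finset.mem_union] at this
      rcases this with h | h
      · obtain ⟨z, hz, hzz⟩ := Finset.mem_map.mp h
        have : z = y := Sum.inl_injective hzz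
        subst this
        rw [hN, Finset.mem_filter] at hz
        exact ⟨by rw [hmx], by rw [hmx]; exact hz.2⟩
      · obtain ⟨z, -, hz⟩ := Finset.mem_map.mp h
        exact absurd hz (by simp)
    · rw [hFx] at hx; simp at hx
  have hmY : ∀ x ∈ X₀, C (m x) ≠ 0 := by
    intro x hx h0
    exact C.valid ((hmF x hx).2) ((hC0 x).trans h0.symm)
  -- key counting: X₀.card + α ≥ n
  have hL1 : n ≤ X₀.card + α := by
    set X₁ : Finset ↥X := Finset.univ.filter (fun x => ¬ (F x).isLeft) with hX₁
    have hsplit : X₀.card + X₁.card = X.card := by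
      rw [hX₀, hX₁, Finset.card_filter_add_card_filter_not, Finset.card_univ,
        Fintype.card_coe]
    have hX₁d : X₁.card ≤ d := by
      have : X₁.image F ⊆ (Finset.univ : Finset (Fin d)).map ⟨Sum.inr, Sum.inr_injective⟩ := by
        intro a ha
        obtain ⟨x, hx, rfl⟩ := Finset.mem_image.mp ha
        rw [hX₁, Finset.mem_filter] at hx
        rcases hFx : F x with y | j
        · rw [hFx] at hx; simp at hx
        · exact Finset.mem_map.mpr ⟨j, Finset.mem_univ _, rfl⟩
      have := Finset.card_le_card this
      rwa [Finset.card_image_of_injective _ hFinj, Finset.card_map, Finset.card_univ,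
        Fintype.card_fin] at this
    omega
  by_cases hne : X₀.Nonempty
  swap
  · -- no matched vertex: α = n, the only maximum independent set is univ
    rw [Finset.not_nonempty_iff_eq_empty] at hne
    refine ⟨{Classical.arbitrary V}, by simp, fun A hA => ?_⟩
    have hAcard : A.card = α := hAeq A hA
    have : A = Finset.univ := by
      apply Finset.eq_univ_of_card
      have := Finset.card_le_univ A
      rw [hne] at hL1
      simp at hL1
      omega
    exact ⟨Classical.arbitrary V, Finset.mem_inter.mpr ⟨this ▸ Finset.mem_univ _, by simp⟩⟩
  obtain ⟨x₀, hx₀⟩ := hne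
  refine ⟨insert (x₀ : V) {m x₀}, Finset.card_insert_le _ _ |>.trans (by simp), fun A hA => ?_⟩
  by_contra hAT
  rw [Finset.not_nonempty_iff_eq_empty, Finset.eq_empty_iff_forall_notMem] at hAT
  have hx₀A : (x₀ : V) ∉ A := fun h =>
    hAT _ (Finset.mem_inter.mpr ⟨h, Finset.mem_insert_self _ _⟩)
  have hmx₀A : m x₀ ∉ A := fun h =>
    hAT _ (Finset.mem_inter.mpr ⟨h, Finset.mem_insert.mpr (Or.inr (Finset.mem_singleton_self _))⟩)
  have hAcard : A.card = α := hAeq A hA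
  set W : Finset V := insert (x₀ : V) (insert (m x₀) A) with hW
  have hx₀m : (x₀ : V) ≠ m x₀ := fun h => hmY x₀ hx₀ (h ▸ hC0 x₀)
  have hWcard : W.card = α + 2 := by
    rw [hW, Finset.card_insert_of_notMem (by
        simp only [Finset.mem_insert]
        push_neg
        exact ⟨hx₀m, hx₀A⟩),
      Finset.card_insert_of_notMem hmx₀A, hAcard]
  set g : ↥X → V := fun x => if (x : V) ∈ A then m x else x.1 with hg
  have hgmem : ∀ x ∈ X₀.erase x₀, g x ∈ Finset.univ \ W := by
    intro x hx
    have hxX₀ : x ∈ X₀ := Finset.mem_of_mem_erase hx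
    have hxne : x ≠ x₀ := Finset.ne_of_mem_erase hx
    rw [Finset.mem_sdiff]
    refine ⟨Finset.mem_univ _, ?_⟩
    rw [hW]
    simp only [Finset.mem_insert]
    push_neg
    rw [hg]
    by_cases hxA : (x : V) ∈ A <;> simp only [hxA, if_true, if_false]
    · refine ⟨fun h => hmY x hxX₀ (by rw [h]; exact hC0 x₀), ?_, ?_⟩
      · intro h
        apply hxne
        apply hFinj
        rw [(hmF x hxX₀).1, (hmF x₀ hx₀).1, h]
      · intro h
        exact hA.1 _ hxA _ h ((hmF x hxX₀).2)
    · exact ⟨fun h => hxne (Subtype.ext h), fun h => hmY x₀ hx₀ (by rw [← h]; exact hC0 x), not_false⟩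
  have hginj : Set.InjOn g (X₀.erase x₀ : Finset ↥X) := by
    intro x hx y hy hxy
    have hxX₀ : x ∈ X₀ := Finset.mem_of_mem_erase (by exact_mod_cast hx)
    have hyX₀ : y ∈ X₀ := Finset.mem_of_mem_erase (by exact_mod_cast hy)
    rw [hg] at hxy
    by_cases hxA : (x : V) ∈ A <;> by_cases hyA : (y : V) ∈ A <;>
      simp only [hxA, hyA, if_true, if_false] at hxy
    · apply hFinj
      rw [(hmF x hxX₀).1, (hmF y hyX₀).1, hxy]
    · exact absurd ((hxy ▸ hC0 y : C (m x) = 0)) (hmY x hxX₀)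
    · exact absurd ((hxy.symm ▸ hC0 x : C (m y) = 0)) (hmY y hyX₀)
    · exact Subtype.ext hxy
  have hcount := Finset.card_le_card_of_injOn g hgmem hginj
  rw [Finset.card_erase_of_mem hx₀, Finset.card_sdiff_of_subset (Finset.subset_univ W),
    Finset.card_univ, hWcard] at hcount
  have hWle : α + 2 ≤ n := by
    have := Finset.card_le_univ W
    rwa [hWcard] at this
  have hpos : 1 ≤ X₀.card := Finset.card_pos.mpr ⟨x₀, hx₀⟩
  omega
end

section
/- If G is a finite graph whose neighborhood set system {N_G(v) : v ∈ V(G)} has VC-dimension at most 1, then G contains no induced path on 5 vertices. -/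
/-- The set system `F` shatters the set `S`. -/
def Shatters {V : Type*} (F : Set (Set V)) (S : Set V) : Prop :=
  ∀ B ⊆ S, ∃ A ∈ F, A ∩ S = B

/-- The neighborhood set system of `G` has VC-dimension at most `d`. -/
def VCDimLE {V : Type*} (G : SimpleGraph V) (d : ℕ) : Prop :=
  ∀ S : Finset V, Shatters {N | ∃ v : V, N = G.neighborSet v} (S : Set V) → S.card ≤ d

/-- A graph whose neighborhood set system has VC-dimension at most 1 has no
induced path on 5 vertices. -/
theorem vcdim_one_p5_free {V : Type*} [Fintype V] [DecidableEq V]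
    (G : SimpleGraph V) (hVC : VCDimLE G 1) :
    ¬ ∃ f : Fin 5 → V, Function.Injective f ∧
      ∀ i j : Fin 5, G.Adj (f i) (f j) ↔ ((i : ℕ) + 1 = j ∨ (j : ℕ) + 1 = i) := by
  rintro ⟨f, hinj, hadj⟩
  have h13 : f 1 ≠ f 3 := fun h => by have := hinj h; simp at this
  -- adjacency facts
  have a01 : G.Adj (f 0) (f 1) := (hadj 0 1).2 (by decide)
  have a21 : G.Adj (f 2) (f 1) := (hadj 2 1).2 (by decide)
  have a23 : G.Adj (f 2) (f 3) := (hadj 2 3).2 (by decide)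
  have a43 : G.Adj (f 4) (f 3) := (hadj 4 3).2 (by decide)
  have n03 : ¬ G.Adj (f 0) (f 3) := fun h => by have := (hadj 0 3).1 h; revert this; decide
  have n13 : ¬ G.Adj (f 1) (f 3) := fun h => by have := (hadj 1 3).1 h; revert this; decide
  have n11 : ¬ G.Adj (f 1) (f 1) := G.irrefl
  have n41 : ¬ G.Adj (f 4) (f 1) := fun h => by have := (hadj 4 1).1 h; revert this; decide
  have hsh : Shatters {N | ∃ v : V, N = G.neighborSet v}
      ((({f 1, f 3} : Finset V) : Set V)) := by
    intro B hB
    have hS : ((({f 1, f 3} : Finset V) : Set V)) = {f 1, f 3} := by simp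
    rw [hS] at hB ⊢
    by_cases h1 : f 1 ∈ B <;> by_cases h3 : f 3 ∈ B
    · refine ⟨G.neighborSet (f 2), ⟨f 2, rfl⟩, ?_⟩
      have hB2 : B = {f 1, f 3} := by
        apply Set.Subset.antisymm hB
        intro x hx
        rcases hx with rfl | hx
        · exact h1
        · rw [Set.mem_singleton_iff] at hx; subst hx; exact h3
      rw [hB2]
      ext x
      simp only [Set.mem_inter_iff, SimpleGraph.mem_neighborSet, Set.mem_insert_iff,
        Set.mem_singleton_iff]
      constructor
      · rintro ⟨-, h⟩; exact h
      · rintro (rfl | rfl)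
        · exact ⟨a21, Or.inl rfl⟩
        · exact ⟨a23, Or.inr rfl⟩
    · refine ⟨G.neighborSet (f 0), ⟨f 0, rfl⟩, ?_⟩
      have hB2 : B = {f 1} := by
        apply Set.Subset.antisymm
        · intro x hx
          rcases hB hx with rfl | hx2
          · rfl
          · rw [Set.mem_singleton_iff] at hx2; subst hx2; exact absurd hx h3
        · intro x hx; rw [Set.mem_singleton_iff] at hx; subst hx; exact h1
      rw [hB2]
      ext x
      simp only [Set.mem_inter_iff, SimpleGraph.mem_neighborSet, Set.mem_insert_iff,
        Set.mem_singleton_iff]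
      constructor
      · rintro ⟨hadjx, rfl | rfl⟩
        · rfl
        · exact absurd hadjx n03
      · rintro rfl; exact ⟨a01, Or.inl rfl⟩
    · refine ⟨G.neighborSet (f 4), ⟨f 4, rfl⟩, ?_⟩
      have hB2 : B = {f 3} := by
        apply Set.Subset.antisymm
        · intro x hx
          rcases hB hx with rfl | hx2
          · exact absurd hx h1
          · exact hx2
        · intro x hx; rw [Set.mem_singleton_iff] at hx; subst hx; exact h3
      rw [hB2]
      ext x
      simp only [Set.mem_inter_iff, SimpleGraph.mem_neighborSet, Set.mem_insert_iff,
        Set.mem_singleton_iff]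
      constructor
      · rintro ⟨hadjx, rfl | rfl⟩
        · exact absurd hadjx n41
        · rfl
      · rintro rfl; exact ⟨a43, Or.inr rfl⟩
    · refine ⟨G.neighborSet (f 1), ⟨f 1, rfl⟩, ?_⟩
      have hB2 : B = ∅ := by
        apply Set.eq_empty_iff_forall_notMem.2
        intro x hx
        rcases hB hx with rfl | hx2
        · exact h1 hx
        · rw [Set.mem_singleton_iff] at hx2; subst hx2; exact h3 hx
      rw [hB2]
      ext x
      simp only [Set.mem_inter_iff, SimpleGraph.mem_neighborSet, Set.mem_insert_iff,
        Set.mem_singleton_iff, Set.mem_empty_iff_false, iff_false, not_and]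
      rintro hadjx (rfl | rfl)
      · exact n11 hadjx
      · exact n13 hadjx
  have hcard : ({f 1, f 3} : Finset V).card = 2 := by
    rw [Finset.card_insert_of_notMem (by simpa using h13), Finset.card_singleton]
  have := hVC {f 1, f 3} hsh
  omega
end

section
/- Let G be a finite graph whose neighborhood set system has VC-dimension at most 1, and suppose a_1, a_2, a_3 form a triangle in G. Then every vertex v ∉ {a_1, a_2, a_3} is adjacent to at least two of a_1, a_2, a_3. -/
lemma vc_aux {V : Type*} [Fintype V] [DecidableEq V] (G : SimpleGraph V)
    (hVC : VCDimLE G 1) (x y z v : V) (hxy : G.Adj x y)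
    (hzx : G.Adj z x) (hzy : G.Adj z y) (hvx : ¬ G.Adj v x) (hvy : ¬ G.Adj v y) :
    False := by
  have hne : x ≠ y := hxy.ne
  have hcard := hVC {x, y} ?_
  · rw [Finset.card_insert_of_notMem (by simp [hne]), Finset.card_singleton] at hcard
    omega
  · intro B hB
    have hS : ((({x, y} : Finset V) : Set V)) = {x, y} := by simp
    rw [hS] at hB ⊢
    by_cases hx : x ∈ B <;> by_cases hy : y ∈ B
    · refine ⟨_, ⟨z, rfl⟩, Set.eq_of_subset_of_subset ?_ ?_⟩
      · rintro w ⟨hw1, hw2⟩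
        rcases hw2 with rfl | rfl
        exacts [hx, hy]
      · intro w hw
        rcases hB hw with rfl | rfl
        · exact ⟨hzx, Or.inl rfl⟩
        · exact ⟨hzy, Or.inr rfl⟩
    · refine ⟨_, ⟨y, rfl⟩, Set.eq_of_subset_of_subset ?_ ?_⟩
      · rintro w ⟨hw1, hw2⟩
        rcases hw2 with rfl | rfl
        · exact hx
        · exact absurd hw1 (G.irrefl)
      · intro w hw
        rcases hB hw with rfl | rfl
        · exact ⟨hxy.symm, Or.inl rfl⟩
        · exact absurd hw hy
    · refine ⟨_, ⟨x, rfl⟩, Set.eq_of_subset_of_subset ?_ ?_⟩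
      · rintro w ⟨hw1, hw2⟩
        rcases hw2 with rfl | rfl
        · exact absurd hw1 (G.irrefl)
        · exact hy
      · intro w hw
        rcases hB hw with rfl | rfl
        · exact absurd hw hx
        · exact ⟨hxy, Or.inr rfl⟩
    · refine ⟨_, ⟨v, rfl⟩, Set.eq_of_subset_of_subset ?_ ?_⟩
      · rintro w ⟨hw1, hw2⟩
        rcases hw2 with rfl | rfl
        · exact absurd hw1 hvx
        · exact absurd hw1 hvy
      · intro w hw
        rcases hB hw with rfl | rfl
        · exact absurd hw hx
        · exact absurd hw hy

/-- In a graph of VC-dimension at most 1, every vertex outside a triangle is adjacent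
to at least two of its vertices. -/
theorem vcdim_one_triangle {V : Type*} [Fintype V] [DecidableEq V]
    (G : SimpleGraph V) (hVC : VCDimLE G 1) (a₁ a₂ a₃ : V)
    (h12 : G.Adj a₁ a₂) (h13 : G.Adj a₁ a₃) (h23 : G.Adj a₂ a₃)
    (v : V) (hv : v ≠ a₁ ∧ v ≠ a₂ ∧ v ≠ a₃) :
    (G.Adj v a₁ ∧ G.Adj v a₂) ∨ (G.Adj v a₁ ∧ G.Adj v a₃) ∨ (G.Adj v a₂ ∧ G.Adj v a₃) := by
  by_contra h
  by_cases h2 : G.Adj v a₂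
  · by_cases h3 : G.Adj v a₃
    · exact h (Or.inr (Or.inr ⟨h2, h3⟩))
    · by_cases h1 : G.Adj v a₁
      · exact h (Or.inl ⟨h1, h2⟩)
      · exact vc_aux G hVC a₁ a₃ a₂ v h13 h12.symm h23 h1 h3
  · by_cases h3 : G.Adj v a₃
    · by_cases h1 : G.Adj v a₁
      · exact h (Or.inr (Or.inl ⟨h1, h3⟩))
      · exact vc_aux G hVC a₁ a₂ a₃ v h12 h13.symm h23.symm h1 h2
    · exact vc_aux G hVC a₂ a₃ a₁ v h23 h12 h13 h2 h3
end

section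
/- Let G be a finite graph containing a triangle whose neighborhood set system has VC-dimension at most 1. Then any two distinct maximum independent sets of G are disjoint; consequently h(G) ≤ n/α(G) where n = |V(G)|. -/
/-!
A pair `{x, y}` is shattered by neighbourhoods as soon as four vertices realise the four
adjacency patterns towards `x` and `y`; VC-dimension at most one forbids this. For an edge `uv`
of a triangle `uvw` the vertices `v`, `u`, `w` realise three of the patterns, so every vertex is
adjacent to `u` or `v`: each vertex sees two corners of the triangle, and any two vertices have
a common neighbour. From this, the non-neighbourhood of any vertex `x` is independent: an edge
`ab` with `a, b ≁ x` would first force `N(x) ⊆ N(a)` and `N(x) ⊆ N(b)`, and then `x`, `b`, `a`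
and a neighbour of `x` would shatter `{a, b}`. A maximum independent set through `x` lies in
this independent set, so it is the whole non-neighbourhood of `x`; thus distinct maximum
independent sets are disjoint, there are at most `n / α` of them, and one vertex from each
hits them all.
-/

section

variable {V : Type*}

theorem shatters_pair {F : Set (Set V)} {x y : V}
    (h₀₀ : ∃ A ∈ F, x ∉ A ∧ y ∉ A) (h₁₀ : ∃ A ∈ F, x ∈ A ∧ y ∉ A)
    (h₀₁ : ∃ A ∈ F, x ∉ A ∧ y ∈ A) (h₁₁ : ∃ A ∈ F, x ∈ A ∧ y ∈ A) :
    Shatters F {x, y} := by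
  intro B hB
  suffices h : ∃ A ∈ F, (x ∈ A ↔ x ∈ B) ∧ (y ∈ A ↔ y ∈ B) by
    obtain ⟨A, hAF, hx, hy⟩ := h
    refine ⟨A, hAF, Set.ext fun z => ?_⟩
    by_cases hzx : z = x
    · subst hzx; simp [hx]
    by_cases hzy : z = y
    · subst hzy; simp [hy]
    have hzB : z ∉ B := fun hz => (hB hz).elim hzx hzy
    simp [hzx, hzy, hzB]
  by_cases hx : x ∈ B <;> by_cases hy : y ∈ B
  · obtain ⟨A, hAF, h⟩ := h₁₁; exact ⟨A, hAF, by simp [h, hx, hy]⟩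
  · obtain ⟨A, hAF, h⟩ := h₁₀; exact ⟨A, hAF, by simp [h, hx, hy]⟩
  · obtain ⟨A, hAF, h⟩ := h₀₁; exact ⟨A, hAF, by simp [h, hx, hy]⟩
  · obtain ⟨A, hAF, h⟩ := h₀₀; exact ⟨A, hAF, by simp [h, hx, hy]⟩

namespace SimpleGraph

variable {G : SimpleGraph V}

theorem shatters_neighborSets_pair {x y v₀₀ v₁₀ v₀₁ v₁₁ : V}
    (h₀₀x : ¬G.Adj v₀₀ x) (h₀₀y : ¬G.Adj v₀₀ y) (h₁₀x : G.Adj v₁₀ x) (h₁₀y : ¬G.Adj v₁₀ y)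
    (h₀₁x : ¬G.Adj v₀₁ x) (h₀₁y : G.Adj v₀₁ y) (h₁₁x : G.Adj v₁₁ x) (h₁₁y : G.Adj v₁₁ y) :
    Shatters {N | ∃ v : V, N = G.neighborSet v} {x, y} :=
  shatters_pair ⟨_, ⟨v₀₀, rfl⟩, h₀₀x, h₀₀y⟩ ⟨_, ⟨v₁₀, rfl⟩, h₁₀x, h₁₀y⟩
    ⟨_, ⟨v₀₁, rfl⟩, h₀₁x, h₀₁y⟩ ⟨_, ⟨v₁₁, rfl⟩, h₁₁x, h₁₁y⟩

variable (hVC : VCDimLE G 1)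
include hVC

theorem not_shatters_pair {x y : V} (hxy : x ≠ y) :
    ¬Shatters {N | ∃ v : V, N = G.neighborSet v} {x, y} := by
  classical
  intro h
  have := hVC {x, y} (by rwa [Finset.coe_pair])
  rw [Finset.card_pair hxy] at this
  omega

theorem adj_or_adj_of_triangle {u v w : V} (huv : G.Adj u v) (huw : G.Adj u w)
    (hvw : G.Adj v w) (z : V) : G.Adj z u ∨ G.Adj z v := by
  by_contra! h
  exact not_shatters_pair hVC huv.ne <| shatters_neighborSets_pair h.1 h.2 huv.symm
    (G.irrefl) (G.irrefl) huv huw.symm hvw.symm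

theorem exists_common_neighbor {a₁ a₂ a₃ : V} (h12 : G.Adj a₁ a₂) (h13 : G.Adj a₁ a₃)
    (h23 : G.Adj a₂ a₃) (z z' : V) : ∃ c, G.Adj c z ∧ G.Adj c z' := by
  have := adj_or_adj_of_triangle hVC h12 h13 h23 z
  have := adj_or_adj_of_triangle hVC h13 h12 h23.symm z
  have := adj_or_adj_of_triangle hVC h23 h12.symm h13.symm z
  have := adj_or_adj_of_triangle hVC h12 h13 h23 z'
  have := adj_or_adj_of_triangle hVC h13 h12 h23.symm z'
  have := adj_or_adj_of_triangle hVC h23 h12.symm h13.symm z'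
  have : (G.Adj z a₁ ∧ G.Adj z' a₁) ∨ (G.Adj z a₂ ∧ G.Adj z' a₂) ∨
      (G.Adj z a₃ ∧ G.Adj z' a₃) := by tauto
  rcases this with ⟨h, h'⟩ | ⟨h, h'⟩ | ⟨h, h'⟩
  exacts [⟨a₁, h.symm, h'.symm⟩, ⟨a₂, h.symm, h'.symm⟩, ⟨a₃, h.symm, h'.symm⟩]

theorem neighborSet_subset_of_adj (hcommon : ∀ z z' : V, ∃ c, G.Adj c z ∧ G.Adj c z')
    {x a b : V} (hab : G.Adj a b) (hxa : ¬G.Adj x a) (hxb : ¬G.Adj x b) :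
    G.neighborSet x ⊆ G.neighborSet a := by
  intro z (hxz : G.Adj x z)
  by_contra (haz : ¬G.Adj a z)
  obtain ⟨c, hca, hcx⟩ := hcommon a x
  have hax : a ≠ x := by rintro rfl; exact hxb hab
  exact not_shatters_pair hVC hax <| shatters_neighborSets_pair (G.irrefl)
    (fun h => hxa h.symm) hab.symm (fun h => hxb h.symm)
    (fun h => haz h.symm) hxz.symm hca hcx

theorem isIndep_nonNeighbors [Fintype V] [DecidableRel G.Adj] {a₁ a₂ a₃ : V}
    (h12 : G.Adj a₁ a₂) (h13 : G.Adj a₁ a₃) (h23 : G.Adj a₂ a₃) (x : V) :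
    IsIndep G (Finset.univ.filter (¬G.Adj x ·)) := by
  intro a ha b hb hab
  rw [Finset.mem_filter] at ha hb
  have hcommon := exists_common_neighbor hVC h12 h13 h23
  obtain ⟨c, hcx, -⟩ := hcommon x x
  have hac : G.Adj a c := neighborSet_subset_of_adj hVC hcommon hab ha.2 hb.2 hcx.symm
  have hbc : G.Adj b c := neighborSet_subset_of_adj hVC hcommon hab.symm hb.2 ha.2 hcx.symm
  exact not_shatters_pair hVC hab.ne <| shatters_neighborSets_pair ha.2 hb.2 hab.symm
    (G.irrefl) (G.irrefl) hab hac.symm hbc.symm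

end SimpleGraph

theorem IsMaxIndep.card_eq [Fintype V] {G : SimpleGraph V} {A B : Finset V}
    (hA : IsMaxIndep G A) (hB : IsMaxIndep G B) : A.card = B.card :=
  le_antisymm (hB.2 A hA.1) (hA.2 B hB.1)

theorem IsMaxIndep.eq_of_subset [Fintype V] {G : SimpleGraph V} {A S : Finset V}
    (hA : IsMaxIndep G A) (hS : IsIndep G S) (hAS : A ⊆ S) : A = S :=
  Finset.eq_of_subset_of_card_le hAS (hA.2 S hS)

theorem IsMaxIndep.eq_nonNeighbors [Fintype V] {G : SimpleGraph V} [DecidableRel G.Adj]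
    {A : Finset V} {x : V} (hindep : IsIndep G (Finset.univ.filter (¬G.Adj x ·)))
    (hA : IsMaxIndep G A) (hx : x ∈ A) : A = Finset.univ.filter (¬G.Adj x ·) :=
  hA.eq_of_subset hindep fun a ha => Finset.mem_filter.mpr ⟨Finset.mem_univ a, hA.1 x hx a ha⟩

theorem IsMaxIndep.disjoint_of_ne [Fintype V] {G : SimpleGraph V} [DecidableRel G.Adj]
    (hindep : ∀ x, IsIndep G (Finset.univ.filter (¬G.Adj x ·)))
    {A B : Finset V} (hA : IsMaxIndep G A) (hB : IsMaxIndep G B) (hne : A ≠ B) :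
    Disjoint A B :=
  Finset.disjoint_left.mpr fun _ hxA hxB =>
    hne ((hA.eq_nonNeighbors (hindep _) hxA).trans (hB.eq_nonNeighbors (hindep _) hxB).symm)

theorem exists_hitting_set_of_disjoint [Fintype V] [DecidableEq V] (P : Finset V → Prop)
    (hdisj : ∀ A B, P A → P B → A ≠ B → Disjoint A B) {k : ℕ} (hk : 0 < k)
    (hcard : ∀ A, P A → A.card = k) :
    ∃ T : Finset V, T.card ≤ Fintype.card V / k ∧ ∀ A, P A → (A ∩ T).Nonempty := by
  classical
  let M := Finset.univ.filter P
  have hmem : ∀ A ∈ M, ∃ v, v ∈ A := fun A hA =>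
    Finset.card_pos.mp (hcard A (Finset.mem_filter.mp hA).2 ▸ hk)
  choose f hf using hmem
  refine ⟨M.attach.image fun A => f A.1 A.2, ?_, fun A hA => ?_⟩
  · have hsum : M.card * k ≤ Fintype.card V := calc
      M.card * k = ∑ A ∈ M, A.card := by
        rw [Finset.sum_congr rfl fun A hA => hcard A (Finset.mem_filter.mp hA).2,
          Finset.sum_const, smul_eq_mul]
      _ = (M.biUnion id).card := (Finset.card_biUnion fun A hA B hB hAB =>
        hdisj A B (Finset.mem_filter.mp hA).2 (Finset.mem_filter.mp hB).2 hAB).symm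
      _ ≤ Fintype.card V := Finset.card_le_univ _
    calc _ ≤ M.attach.card := Finset.card_image_le
      _ = M.card := Finset.card_attach
      _ ≤ Fintype.card V / k := (Nat.le_div_iff_mul_le hk).mpr hsum
  · have hAM : A ∈ M := Finset.mem_filter.mpr ⟨Finset.mem_univ A, hA⟩
    exact ⟨f A hAM, Finset.mem_inter.mpr
      ⟨hf A hAM, Finset.mem_image.mpr ⟨⟨A, hAM⟩, Finset.mem_attach _ _, rfl⟩⟩⟩

end

/-- In a graph of VC-dimension at most 1 containing a triangle, distinct maximum
independent sets are disjoint, hence `h(G) ≤ n / α(G)`. -/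
theorem vcdim_one_triangle_disjoint {V : Type*} [Fintype V] [DecidableEq V]
    (G : SimpleGraph V) (hVC : VCDimLE G 1) (a₁ a₂ a₃ : V)
    (h12 : G.Adj a₁ a₂) (h13 : G.Adj a₁ a₃) (h23 : G.Adj a₂ a₃) :
    (∀ A B : Finset V, IsMaxIndep G A → IsMaxIndep G B → A ≠ B → Disjoint A B) ∧
    (∀ A₀ : Finset V, IsMaxIndep G A₀ →
      ∃ T : Finset V, T.card ≤ Fintype.card V / A₀.card ∧
        ∀ A : Finset V, IsMaxIndep G A → (A ∩ T).Nonempty) := by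
  classical
  have hdisj : ∀ A B : Finset V, IsMaxIndep G A → IsMaxIndep G B → A ≠ B → Disjoint A B :=
    fun _ _ => IsMaxIndep.disjoint_of_ne (G.isIndep_nonNeighbors hVC h12 h13 h23)
  refine ⟨hdisj, fun A₀ hA₀ =>
    exists_hitting_set_of_disjoint _ hdisj ?_ fun A hA => hA.card_eq hA₀⟩
  have hsingleton : IsIndep G {a₁} := by simp [IsIndep]
  simpa using hA₀.2 {a₁} hsingleton
end

section
/- Let G be an even-hole-free graph and let I_1, I_2 be two maximum independent sets of G. Then the induced subgraph G[I_1 △ I_2] on the symmetric difference of I_1 and I_2 is acyclic (a forest). -/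
/-- `G` has an (induced) hole of length `m`: an induced cycle on `m` vertices. -/
def HasHole {V : Type*} (G : SimpleGraph V) (m : ℕ) : Prop :=
  ∃ f : Fin m → V, Function.Injective f ∧
    ∀ i j : Fin m, G.Adj (f i) (f j) ↔
      (((i : ℕ) + 1) % m = j ∨ ((j : ℕ) + 1) % m = i)

/-- `G` is even-hole-free: no induced cycle of even length at least 4. -/
def EvenHoleFree {V : Type*} (G : SimpleGraph V) : Prop :=
  ∀ m : ℕ, 4 ≤ m → Even m → ¬ HasHole G m

/-!
The two independent sets 2-colour the graph induced on their symmetric difference, so every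
cycle there is even. A shortest cycle of a graph has no chord (a chord would split off a shorter
cycle), so a cycle in the induced graph yields an induced cycle of `G` of even length at least 4,
i.e. an even hole.
-/

namespace SimpleGraph

variable {V : Type*} {G : SimpleGraph V} {n : ℕ}

theorem cycleGraph_adj_iff_val (hn : 2 ≤ n) {u v : Fin n} :
    (cycleGraph n).Adj u v ↔ (u : ℕ) + 1 = v ∨ (v : ℕ) + 1 = u ∨
      (u : ℕ) + 1 = n ∧ (v : ℕ) = 0 ∨ (v : ℕ) + 1 = n ∧ (u : ℕ) = 0 := by
  rw [cycleGraph_adj']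
  have := u.isLt
  have := v.isLt
  rcases lt_trichotomy u v with h | rfl | h
  · rw [Fin.coe_sub_iff_lt.2 h, Fin.coe_sub_iff_le.2 h.le]
    rw [Fin.lt_def] at h
    omega
  · rw [Fin.coe_sub_iff_le.2 le_rfl]
    omega
  · rw [Fin.coe_sub_iff_lt.2 h, Fin.coe_sub_iff_le.2 h.le]
    rw [Fin.lt_def] at h
    omega

theorem cycleGraph_adj_iff_mod (hn : 2 ≤ n) {u v : Fin n} :
    (cycleGraph n).Adj u v ↔ ((u : ℕ) + 1) % n = v ∨ ((v : ℕ) + 1) % n = u := by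
  have succ_mod : ∀ w : Fin n, ((w : ℕ) + 1) % n = if (w : ℕ) + 1 = n then 0 else (w : ℕ) + 1 := by
    intro w
    split_ifs with h
    · rw [h, Nat.mod_self]
    · exact Nat.mod_eq_of_lt (by omega)
  rw [cycleGraph_adj_iff_val hn, succ_mod, succ_mod]
  split_ifs <;> omega

theorem hasHole_iff_isIndContained_cycleGraph (hn : 2 ≤ n) :
    HasHole G n ↔ cycleGraph n ⊴ G := by
  refine ⟨fun ⟨f, hf, hadj⟩ ↦ ⟨⟨⟨f, hf⟩, ?_⟩⟩, fun ⟨e⟩ ↦ ⟨e, e.injective, fun u v ↦ ?_⟩⟩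
  · intro u v
    simp [hadj, cycleGraph_adj_iff_mod hn]
  · rw [e.map_adj_iff, cycleGraph_adj_iff_mod hn]

theorem Copy.exists_shorter_cycleGraph_of_chord (f : Copy (cycleGraph n) G) {u v : Fin n}
    (huv : u < v) (hnadj : ¬(cycleGraph n).Adj u v) (hadj : G.Adj (f u) (f v)) :
    ∃ k, 3 ≤ k ∧ k < n ∧ cycleGraph k ⊑ G := by
  have hn : 2 ≤ n := by have := v.isLt; rw [Fin.lt_def] at huv; omega
  rw [cycleGraph_adj_iff_val hn] at hnadj
  rw [Fin.lt_def] at huv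
  -- the cycle `u, u + 1, …, v`, closed up by the chord
  refine ⟨v - u + 1, by omega, by omega, ⟨⟨fun t ↦ f ⟨u + t, by omega⟩, ?_⟩, ?_⟩⟩
  · intro s t hst
    rw [cycleGraph_adj_iff_val (by omega)] at hst
    rcases hst with h | h | h | h
    · exact f.toHom.map_adj ((cycleGraph_adj_iff_val hn).2 (by simp only; omega))
    · exact f.toHom.map_adj ((cycleGraph_adj_iff_val hn).2 (by simp only; omega))
    · convert hadj.symm using 2 <;> ext <;> simp only <;> omega
    · convert hadj using 2 <;> ext <;> simp only <;> omega
  · intro s t hst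
    simpa [Fin.ext_iff] using f.injective hst

theorem exists_isIndContained_cycleGraph (h : cycleGraph n ⊑ G) (hn : 3 ≤ n) :
    ∃ m, 3 ≤ m ∧ cycleGraph m ⊴ G := by
  induction n using Nat.strong_induction_on with
  | _ n ih =>
  obtain ⟨f⟩ := h
  by_cases hind : ∀ u v, G.Adj (f u) (f v) → (cycleGraph n).Adj u v
  · exact ⟨n, hn, ⟨⟨⟨f, f.injective⟩, ⟨hind _ _, f.toHom.map_adj⟩⟩⟩⟩
  push Not at hind
  obtain ⟨u, v, hadj, hnadj⟩ := hind
  obtain ⟨k, hk, hkn, hcopy⟩ : ∃ k, 3 ≤ k ∧ k < n ∧ cycleGraph k ⊑ G := by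
    rcases lt_trichotomy u v with huv | rfl | hvu
    · exact f.exists_shorter_cycleGraph_of_chord huv hnadj hadj
    · exact (G.irrefl hadj).elim
    · exact f.exists_shorter_cycleGraph_of_chord hvu (fun h ↦ hnadj h.symm) hadj.symm
  exact ih k hkn hcopy hk

theorem IsBipartite.even_of_cycleGraph_isContained (hG : G.IsBipartite)
    (h : cycleGraph n ⊑ G) (hn : 3 ≤ n) : Even n := by
  obtain ⟨v, p, -, rfl⟩ := (cycleGraph_isContained_iff hn).1 h
  by_contra hodd
  have h3 := p.three_le_chromaticNumber_of_odd_loop (Nat.not_even_iff_odd.1 hodd)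
  have h2 := chromaticNumber_le_two_iff_isBipartite.2 hG
  exact absurd (h3.trans h2) (by norm_num)

theorem isBipartite_induce_symmDiff {A B : Set V} (hA : G.IsIndepSet A) (hB : G.IsIndepSet B) :
    (G.induce (symmDiff A B)).IsBipartite := by
  refine IsBipartiteWith.isBipartite (s := {x | ↑x ∈ A}) (t := {x | ↑x ∈ B}) ⟨?_, ?_⟩
  · rw [Set.disjoint_left]
    rintro ⟨x, hx⟩ hxA hxB
    rw [Set.mem_symmDiff] at hx
    exact hx.elim (fun h ↦ h.2 hxB) (fun h ↦ h.2 hxA)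
  · rintro ⟨x, hx⟩ ⟨y, hy⟩ (hxy : G.Adj x y)
    have hA' : ¬(x ∈ A ∧ y ∈ A) := fun ⟨hxA, hyA⟩ ↦ hA hxA hyA hxy.ne hxy
    have hB' : ¬(x ∈ B ∧ y ∈ B) := fun ⟨hxB, hyB⟩ ↦ hB hxB hyB hxy.ne hxy
    rw [Set.mem_symmDiff] at hx hy
    simp only [Set.mem_ofPred_eq]
    tauto

end SimpleGraph

open SimpleGraph

theorem IsIndep.isIndepSet {V : Type*} {G : SimpleGraph V} {A : Finset V} (h : IsIndep G A) :
    G.IsIndepSet A :=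
  fun a ha b hb _ ↦ h a ha b hb

theorem evenHoleFree_symmDiff_acyclic_general {V : Type*} [Fintype V]
    (G : SimpleGraph V) (hG : EvenHoleFree G)
    (I₁ I₂ : Finset V) (h₁ : IsMaxIndep G I₁) (h₂ : IsMaxIndep G I₂) :
    (G.induce (symmDiff (I₁ : Set V) (I₂ : Set V))).IsAcyclic := by
  rw [isAcyclic_iff_free_cycleGraph]
  intro n hn hcycle
  obtain ⟨m, hm, hhole⟩ := exists_isIndContained_cycleGraph hcycle hn
  have hbip := isBipartite_induce_symmDiff h₁.1.isIndepSet h₂.1.isIndepSet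
  have heven : Even m := hbip.even_of_cycleGraph_isContained hhole.isContained hm
  refine hG m (by obtain ⟨r, rfl⟩ := heven; omega) heven ?_
  exact (hasHole_iff_isIndContained_cycleGraph (by omega)).2
    (hhole.trans (Embedding.induce _).isIndContained)

/-- In an even-hole-free graph, the induced subgraph on the symmetric difference of
two maximum independent sets is acyclic. -/
theorem evenHoleFree_symmDiff_acyclic {V : Type*} [Fintype V] [DecidableEq V]
    (G : SimpleGraph V) (hG : EvenHoleFree G)
    (I₁ I₂ : Finset V) (h₁ : IsMaxIndep G I₁) (h₂ : IsMaxIndep G I₂) :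
    (G.induce (symmDiff (I₁ : Set V) (I₂ : Set V))).IsAcyclic :=
  evenHoleFree_symmDiff_acyclic_general G hG I₁ I₂ h₁ h₂
end

section
/- There do not exist seven closed disks A, B_1, ..., B_6 in the plane such that each B_i has radius at least the radius of A, each B_i intersects A, and the disks B_1, ..., B_6 are pairwise disjoint. -/
/-!
Seen from the centre of `A`, the centres of `Bᵢ` and `Bⱼ` lie within `rA + rᵢ ≤ rᵢ + rⱼ` and
`rA + rⱼ ≤ rᵢ + rⱼ`, while they are more than `rᵢ + rⱼ` apart; by the law of cosines they subtend
an angle greater than `π / 3`. Sorting the six directions by argument, the five consecutive gaps and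
the gap closing the circle would all exceed `π / 3`, so they would sum to more than `2π`.
-/

open Metric Real InnerProductGeometry
open scoped RealInnerProductSpace

theorem two_mul_real_inner_lt_norm_mul_norm_of_norm_le_of_lt_norm_sub
    {E : Type*} [NormedAddCommGroup E] [InnerProductSpace ℝ E] {u v : E} {s : ℝ}
    (hu : ‖u‖ ≤ s) (hv : ‖v‖ ≤ s) (huv : s < ‖u - v‖) :
    2 * ⟪u, v⟫ < ‖u‖ * ‖v‖ := by
  rw [real_inner_eq_norm_mul_self_add_norm_mul_self_sub_norm_sub_mul_self_div_two]
  -- `a² - ab + b² ≤ max a b ^ 2 ≤ s²`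
  have hs : s * s < ‖u - v‖ * ‖u - v‖ := by
    have hs₀ : 0 ≤ s := (norm_nonneg u).trans hu
    nlinarith
  rcases le_total ‖u‖ ‖v‖ with h | h <;>
    nlinarith [norm_nonneg u, norm_nonneg v]

theorem two_mul_real_inner_lt_of_disjoint_closedBall
    {E : Type*} [NormedAddCommGroup E] [InnerProductSpace ℝ E] {x y₁ y₂ : E} {ρ r₁ r₂ : ℝ}
    (h₁ : ρ ≤ r₁) (h₂ : ρ ≤ r₂)
    (hm₁ : (closedBall x ρ ∩ closedBall y₁ r₁).Nonempty)
    (hm₂ : (closedBall x ρ ∩ closedBall y₂ r₂).Nonempty)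
    (hd : Disjoint (closedBall y₁ r₁) (closedBall y₂ r₂)) :
    2 * ⟪y₁ - x, y₂ - x⟫ < ‖y₁ - x‖ * ‖y₂ - x‖ := by
  have hr₁ : 0 ≤ r₁ := nonempty_closedBall.1 hm₁.right
  have hr₂ : 0 ≤ r₂ := nonempty_closedBall.1 hm₂.right
  have hx₁ := dist_le_add_of_nonempty_closedBall_inter_closedBall hm₁
  have hx₂ := dist_le_add_of_nonempty_closedBall_inter_closedBall hm₂
  have h₁₂ := (disjoint_closedBall_closedBall_iff hr₁ hr₂).1 hd
  refine two_mul_real_inner_lt_norm_mul_norm_of_norm_le_of_lt_norm_sub (s := r₁ + r₂) ?_ ?_ ?_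
  · rw [← dist_eq_norm, dist_comm]; linarith
  · rw [← dist_eq_norm, dist_comm]; linarith
  · rwa [sub_sub_sub_cancel_right, ← dist_eq_norm]

theorem Complex.real_inner_eq_norm_mul_norm_mul_cos_arg_sub (z w : ℂ) :
    ⟪z, w⟫ = ‖z‖ * ‖w‖ * Real.cos (z.arg - w.arg) := by
  rcases eq_or_ne z 0 with rfl | hz
  · simp
  rcases eq_or_ne w 0 with rfl | hw
  · simp
  rw [← cos_angle_mul_norm_mul_norm, angle_eq_abs_arg hz hw, Real.cos_abs, ← Real.Angle.cos_coe,
    arg_div_coe_angle hz hw, ← Real.Angle.coe_sub, Real.Angle.cos_coe, mul_comm]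

theorem Complex.cos_arg_sub_lt_half_of_two_mul_real_inner_lt {z w : ℂ}
    (h : 2 * ⟪z, w⟫ < ‖z‖ * ‖w‖) : Real.cos (z.arg - w.arg) < 1 / 2 := by
  rw [real_inner_eq_norm_mul_norm_mul_cos_arg_sub] at h
  have hzw : 0 < ‖z‖ * ‖w‖ := by
    rcases (mul_nonneg (norm_nonneg z) (norm_nonneg w)).lt_or_eq with h' | h'
    · exact h'
    · rw [← h'] at h; simp at h
  nlinarith

theorem Real.lt_abs_and_abs_lt_two_pi_sub_of_cos_lt_cos {t α : ℝ} (hαπ : α ≤ π)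
    (h : cos t < cos α) (ht : |t| < 2 * π) : α < |t| ∧ |t| < 2 * π - α := by
  rw [← cos_abs] at h
  constructor
  · by_contra! hle
    exact h.not_ge (cos_le_cos_of_nonneg_of_le_pi (abs_nonneg t) hαπ hle)
  · by_contra! hle
    have : cos α ≤ cos (2 * π - |t|) :=
      cos_le_cos_of_nonneg_of_le_pi (by linarith) hαπ (by linarith)
    rw [cos_two_pi_sub] at this
    exact h.not_ge this

theorem Tuple.exists_mul_le_sub_of_le_abs_sub {n : ℕ} {c : ℝ} (a : Fin (n + 1) → ℝ)
    (h : ∀ i j, i ≠ j → c ≤ |a i - a j|) : ∃ i j, n * c ≤ a j - a i := by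
  set b := a ∘ Tuple.sort a
  have hgap (k : Fin n) : c ≤ b k.succ - b k.castSucc := by
    have hne : Tuple.sort a k.succ ≠ Tuple.sort a k.castSucc :=
      (Tuple.sort a).injective.ne (Fin.castSucc_lt_succ (i := k)).ne'
    have hmono : b k.castSucc ≤ b k.succ := Tuple.monotone_sort a (Fin.castSucc_le_succ k)
    exact (h _ _ hne).trans_eq (abs_of_nonneg (sub_nonneg.2 hmono))
  have hspread (k : Fin (n + 1)) : (k : ℕ) * c ≤ b k - b 0 := by
    induction k using Fin.induction with
    | zero => simp
    | succ k ih =>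
      push_cast [Fin.val_succ, Fin.val_castSucc] at ih ⊢
      linarith [hgap k]
  exact ⟨_, _, by simpa [b] using hspread (Fin.last n)⟩

/-- There is no configuration of seven closed disks `A, B₁, …, B₆` in the plane such
that each `Bᵢ` has radius at least that of `A`, each `Bᵢ` intersects `A`, and the
`Bᵢ` are pairwise disjoint. -/
theorem no_six_disjoint_disks_touching :
    ¬ ∃ (x : EuclideanSpace ℝ (Fin 2)) (rA : ℝ)
        (y : Fin 6 → EuclideanSpace ℝ (Fin 2)) (r : Fin 6 → ℝ),
      0 < rA ∧ (∀ i, rA ≤ r i) ∧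
      (∀ i, (Metric.closedBall x rA ∩ Metric.closedBall (y i) (r i)).Nonempty) ∧
      (∀ i j, i ≠ j →
        Disjoint (Metric.closedBall (y i) (r i)) (Metric.closedBall (y j) (r j))) := by
  rintro ⟨x, rA, y, r, -, hr, hmeet, hdisj⟩
  let e := Complex.orthonormalBasisOneI.repr.symm
  set θ : Fin 6 → ℝ := fun i => (e (y i - x)).arg
  have hsep (i j : Fin 6) (hij : i ≠ j) : π / 3 < |θ i - θ j| ∧ |θ i - θ j| < 2 * π - π / 3 := by
    have hinner := two_mul_real_inner_lt_of_disjoint_closedBall (hr i) (hr j) (hmeet i) (hmeet j)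
      (hdisj i j hij)
    rw [← e.inner_map_map, ← e.norm_map, ← e.norm_map] at hinner
    have hcos := Complex.cos_arg_sub_lt_half_of_two_mul_real_inner_lt hinner
    rw [← cos_pi_div_three] at hcos
    exact lt_abs_and_abs_lt_two_pi_sub_of_cos_lt_cos (by linarith [pi_pos]) hcos
      (Complex.abs_arg_sub_arg_lt _ _)
  obtain ⟨i, j, hij⟩ := Tuple.exists_mul_le_sub_of_le_abs_sub θ fun i j h ↦ (hsep i j h).1.le
  rcases eq_or_ne j i with rfl | hne
  · norm_num at hij
    linarith [pi_pos]
  · norm_num at hij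
    linarith [(hsep j i hne).2, le_abs_self (θ j - θ i)]
end

section
/- Let d_1, ..., d_7 be positive reals with d_7 ≤ d_i for all i, and let x, y_1, ..., y_6 ∈ ℝ² be points such that |x − y_i| ≤ d_7 + d_i for each i and |y_i − y_j| > d_i + d_j for all i ≠ j. Then this configuration is impossible. -/
open Real InnerProductGeometry EuclideanGeometry Module

/-!
Every `yᵢ` differs from `x`, since otherwise `|yᵢ - yⱼ| = |x - yⱼ| ≤ d₇ + dⱼ ≤ dᵢ + dⱼ`
for any `j ≠ i`.
Six rays from `x` in the plane contain two, towards `yᵢ` and `yⱼ`, meeting at an angle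
`≤ π/3`. By the law of cosines the side `yᵢyⱼ` of that triangle is then no longer than the
longer of the sides at `x`, so `|yᵢ - yⱼ| ≤ max (d₇ + dᵢ) (d₇ + dⱼ) ≤ dᵢ + dⱼ`.
-/

theorem EuclideanGeometry.dist_le_max_of_angle_le_pi_div_three {V P : Type*}
    [NormedAddCommGroup V] [InnerProductSpace ℝ V] [MetricSpace P] [NormedAddTorsor V P]
    {p₁ p₂ p₃ : P} (h : ∠ p₁ p₂ p₃ ≤ π / 3) :
    dist p₁ p₃ ≤ max (dist p₁ p₂) (dist p₃ p₂) := by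
  have hcos : 1 / 2 ≤ cos (∠ p₁ p₂ p₃) := by
    rw [← cos_pi_div_three]
    exact cos_le_cos_of_nonneg_of_le_pi (angle_nonneg _ _ _) (by linarith [pi_pos]) h
  have hlaw := dist_sq_eq_dist_sq_add_dist_sq_sub_two_mul_dist_mul_dist_mul_cos_angle p₁ p₂ p₃
  have ha := dist_nonneg (x := p₁) (y := p₂)
  have hb := dist_nonneg (x := p₃) (y := p₂)
  have hsq : dist p₁ p₃ * dist p₁ p₃ ≤
      max (dist p₁ p₂) (dist p₃ p₂) * max (dist p₁ p₂) (dist p₃ p₂) := by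
    rcases le_total (dist p₁ p₂) (dist p₃ p₂) with hle | hle
    · rw [max_eq_right hle]; nlinarith [mul_nonneg ha hb]
    · rw [max_eq_left hle]; nlinarith [mul_nonneg ha hb]
  exact mul_self_le_mul_self_iff dist_nonneg (le_max_of_le_left ha) |>.mpr hsq

lemma pi_div_three_lt_and_lt_of_cos_lt_half {t : ℝ} (h₀ : 0 ≤ t) (h₂π : t ≤ 2 * π)
    (h : cos t < 1 / 2) : π / 3 < t ∧ t < 5 * π / 3 := by
  rw [← cos_pi_div_three] at h
  constructor
  · by_contra! ht
    exact h.not_ge (cos_le_cos_of_nonneg_of_le_pi h₀ (by linarith [pi_pos]) ht)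
  · by_contra! ht
    rw [← cos_two_pi_sub] at h
    exact h.not_ge
      (cos_le_cos_of_nonneg_of_le_pi (by linarith) (by linarith [pi_pos]) (by linarith))

theorem exists_ne_one_half_le_cos_sub (θ : Fin 6 → ℝ) (hθ : ∀ i j, θ i - θ j ≤ 2 * π) :
    ∃ i j, i ≠ j ∧ 1 / 2 ≤ cos (θ i - θ j) := by
  by_contra! hcos
  -- sorted, the five consecutive gaps would exceed `π/3` while the total spread is `< 5π/3`
  set σ := Tuple.sort θ
  have hmono : Monotone (θ ∘ σ) := Tuple.monotone_sort θ
  have hgap : ∀ k l : Fin 6, k < l →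
      π / 3 < θ (σ l) - θ (σ k) ∧ θ (σ l) - θ (σ k) < 5 * π / 3 :=
    fun k l hkl => pi_div_three_lt_and_lt_of_cos_lt_half (sub_nonneg.2 (hmono hkl.le))
      (hθ _ _) (hcos _ _ (σ.injective.ne hkl.ne'))
  linarith [(hgap 0 1 (by decide)).1, (hgap 1 2 (by decide)).1, (hgap 2 3 (by decide)).1,
    (hgap 3 4 (by decide)).1, (hgap 4 5 (by decide)).1, (hgap 0 5 (by decide)).2]

theorem EuclideanGeometry.exists_angle_le_pi_div_three {V P : Type*}
    [NormedAddCommGroup V] [InnerProductSpace ℝ V] [MetricSpace P] [NormedAddTorsor V P]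
    [Fact (finrank ℝ V = 2)] (p : Fin 6 → P) (c : P) (hp : ∀ i, p i ≠ c) :
    ∃ i j, i ≠ j ∧ ∠ (p i) c (p j) ≤ π / 3 := by
  have : FiniteDimensional ℝ V := .of_fact_finrank_eq_two
  let o : Orientation ℝ V (Fin 2) := (finBasisOfFinrankEq ℝ V Fact.out).orientation
  have hv : ∀ i, p i -ᵥ c ≠ 0 := fun i => vsub_ne_zero.2 (hp i)
  let θ i := (o.oangle (p 0 -ᵥ c) (p i -ᵥ c)).toReal
  obtain ⟨i, j, hij, hcos⟩ := exists_ne_one_half_le_cos_sub θ fun i j => by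
    linarith [(Real.Angle.toReal_mem_Ioc (o.oangle (p 0 -ᵥ c) (p i -ᵥ c))).2,
      (Real.Angle.toReal_mem_Ioc (o.oangle (p 0 -ᵥ c) (p j -ᵥ c))).1]
  have hθ : cos (θ i - θ j) = cos (∠ (p j) c (p i)) := by
    rw [← Real.Angle.cos_coe, Real.Angle.coe_sub, Real.Angle.coe_toReal, Real.Angle.coe_toReal,
      o.oangle_sub_left (hv 0) (hv j) (hv i), o.cos_oangle_eq_cos_angle (hv j) (hv i)]
    rfl
  refine ⟨j, i, hij.symm, ?_⟩
  by_contra! hlt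
  rw [hθ, ← cos_pi_div_three] at hcos
  exact hcos.not_gt (cos_lt_cos_of_nonneg_of_le_pi (by positivity) (angle_le_pi _ _ _) hlt)

/-- Metric core of the disk lemma: there are no positive reals `d₁, …, d₇` with
`d₇ ≤ dᵢ` and points `x, y₁, …, y₆ ∈ ℝ²` with `|x − yᵢ| ≤ d₇ + dᵢ` and
`|yᵢ − yⱼ| > dᵢ + dⱼ` for `i ≠ j`. -/
theorem no_metric_disk_configuration :
    ¬ ∃ (d : Fin 7 → ℝ) (x : EuclideanSpace ℝ (Fin 2))
        (y : Fin 6 → EuclideanSpace ℝ (Fin 2)),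
      (∀ i, 0 < d i) ∧ (∀ i, d 6 ≤ d i) ∧
      (∀ i : Fin 6, dist x (y i) ≤ d 6 + d i.castSucc) ∧
      (∀ i j : Fin 6, i ≠ j → d i.castSucc + d j.castSucc < dist (y i) (y j)) := by
  rintro ⟨d, x, y, -, hd, hxy, hyy⟩
  have : Fact (finrank ℝ (EuclideanSpace ℝ (Fin 2)) = 2) := ⟨finrank_euclideanSpace_fin⟩
  have hyx : ∀ i, y i ≠ x := by
    intro i hi
    obtain ⟨j, hji⟩ := exists_ne i
    have := hyy i j hji.symm
    rw [hi] at this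
    linarith [hxy j, hd i.castSucc]
  obtain ⟨i, j, hij, hangle⟩ := exists_angle_le_pi_div_three y x hyx
  have hmax := dist_le_max_of_angle_le_pi_div_three hangle
  rw [dist_comm (y i) x, dist_comm (y j) x] at hmax
  have hsum : max (dist x (y i)) (dist x (y j)) ≤ d i.castSucc + d j.castSucc :=
    max_le (by linarith [hxy i, hd j.castSucc]) (by linarith [hxy j, hd i.castSucc])
  linarith [hyy i j hij]
end

section
/- Any closed unit disk D in the plane that intersects a fixed closed unit disk D_0 centered at the origin must contain at least one of 11 fixed points, namely the origin together with the 10 points at distance 3/2 from the origin at angles 2πk/10, k = 0, ..., 9. -/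
/-!
A unit disk centred at `z` meets the one centred at the origin iff `‖z‖ ≤ 2`, and it contains the
origin iff `‖z‖ ≤ 1`. Otherwise `1 < ‖z‖ ≤ 2`, and one of the ten directions `2πk/10` lies within
`π/10` of `arg z`, so the angle between `z` and `(3/2) e^{2πik/10}` has cosine at least
`cos (π/10) ≥ 19/20`. By the law of cosines the squared distance between the two points is then
at most `r² - (57/20) r + 9/4` with `r = ‖z‖`, which is `≤ 1` on `[1, 2]`.
-/

open Complex

theorem Real.exists_cos_pi_div_le_cos_sub (θ : ℝ) (n : ℕ) [NeZero n] :
    ∃ k : Fin n, Real.cos (Real.pi / n) ≤ Real.cos (θ - 2 * Real.pi * k / n) := by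
  have hn : (0 : ℝ) < n := Nat.cast_pos.mpr (Nat.pos_of_neZero n)
  set m : ℤ := round (θ * n / (2 * Real.pi))
  have hm : |θ - 2 * Real.pi * m / n| ≤ Real.pi / n := by
    have heq : θ - 2 * Real.pi * m / n = 2 * Real.pi / n * (θ * n / (2 * Real.pi) - m) := by
      field_simp
    rw [heq, abs_mul, abs_of_pos (by positivity)]
    calc 2 * Real.pi / n * |θ * n / (2 * Real.pi) - m| ≤ 2 * Real.pi / n * (1 / 2) := by
          gcongr
          exact abs_sub_round _
      _ = Real.pi / n := by ring
  have hmod : 0 ≤ m % n := Int.emod_nonneg m (by exact_mod_cast NeZero.ne n)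
  have hlt : m % n < n := Int.emod_lt_of_pos m (by exact_mod_cast Nat.pos_of_neZero n)
  refine ⟨⟨(m % n).toNat, by omega⟩, ?_⟩
  have hk : (((m % n).toNat : ℕ) : ℝ) = m - n * (m / n : ℤ) := by
    rw [← Int.cast_natCast, Int.toNat_of_nonneg hmod, Int.emod_def]
    push_cast
    ring
  have hshift : θ - 2 * Real.pi * (((m % n).toNat : ℕ) : ℝ) / n
      = (θ - 2 * Real.pi * m / n) + (m / n : ℤ) * (2 * Real.pi) := by
    rw [hk]
    field_simp
    ring
  rw [Fin.val_mk, hshift, Real.cos_add_int_mul_two_pi, ← Real.cos_abs (θ - _)]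
  exact Real.cos_le_cos_of_nonneg_of_le_pi (abs_nonneg _)
    (div_le_self Real.pi_pos.le (by exact_mod_cast Nat.pos_of_neZero n)) hm

theorem Complex.norm_sub_ofReal_mul_exp_sq (z : ℂ) (s a : ℝ) :
    ‖z - s * exp (a * I)‖ ^ 2 = ‖z‖ ^ 2 + s ^ 2 - 2 * s * ‖z‖ * Real.cos (arg z - a) := by
  conv_lhs => rw [← norm_mul_exp_arg_mul_I z]
  rw [Complex.sq_norm, normSq_apply]
  simp only [sub_re, sub_im, mul_re, mul_im, ofReal_re, ofReal_im, exp_ofReal_mul_I_re,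
    exp_ofReal_mul_I_im]
  rw [Real.cos_sub]
  linear_combination ‖z‖ ^ 2 * Real.sin_sq_add_cos_sq (arg z) + s ^ 2 * Real.sin_sq_add_cos_sq a

theorem Real.nineteen_div_twenty_le_cos_pi_div_ten : (19 / 20 : ℝ) ≤ Real.cos (Real.pi / 10) := by
  nlinarith [Real.one_sub_sq_div_two_le_cos (x := Real.pi / 10), Real.pi_pos, Real.pi_lt_d2]

theorem Complex.norm_sub_three_halves_mul_exp_le_one {z : ℂ} {a : ℝ} (h1 : 1 ≤ ‖z‖)
    (h2 : ‖z‖ ≤ 2) (hcos : Real.cos (Real.pi / 10) ≤ Real.cos (arg z - a)) :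
    ‖z - (3 / 2 : ℝ) * exp (a * I)‖ ≤ 1 := by
  have hcos' := Real.nineteen_div_twenty_le_cos_pi_div_ten.trans hcos
  refine (pow_le_one_iff_of_nonneg (norm_nonneg _) two_ne_zero).1 ?_
  calc ‖z - (3 / 2 : ℝ) * exp (a * I)‖ ^ 2
      = ‖z‖ ^ 2 + (3 / 2) ^ 2 - 2 * (3 / 2) * ‖z‖ * Real.cos (arg z - a) :=
        norm_sub_ofReal_mul_exp_sq z (3 / 2) a
    _ ≤ ‖z‖ ^ 2 + (3 / 2) ^ 2 - 2 * (3 / 2) * ‖z‖ * (19 / 20) := by gcongr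
    _ ≤ 1 := by nlinarith

/-- Any closed unit disk in the plane (identified with `ℂ`) meeting the closed unit
disk centered at the origin contains one of 11 fixed points: the origin, or one of
the 10 points at distance `3/2` from the origin at angles `2πk/10`. -/
theorem unit_disk_pierced_by_eleven_points (z : ℂ)
    (hmeet : (Metric.closedBall z 1 ∩ Metric.closedBall (0 : ℂ) 1).Nonempty) :
    (0 : ℂ) ∈ Metric.closedBall z 1 ∨
    ∃ k : Fin 10, (3 / 2 : ℂ) * Complex.exp (Complex.I * (2 * Real.pi * k / 10))
      ∈ Metric.closedBall z 1 := by
  have hz2 : ‖z‖ ≤ 2 := by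
    simpa [one_add_one_eq_two] using
      Metric.dist_le_add_of_nonempty_closedBall_inter_closedBall hmeet
  rcases le_or_gt ‖z‖ 1 with hz1 | hz1
  · left
    simpa using hz1
  · right
    obtain ⟨k, hk⟩ := Real.exists_cos_pi_div_le_cos_sub (arg z) 10
    refine ⟨k, ?_⟩
    have hpoint : (3 / 2 : ℂ) * exp (I * (2 * Real.pi * k / 10))
        = ((3 / 2 : ℝ) : ℂ) * exp ((2 * Real.pi * k / 10 : ℝ) * I) := by
      push_cast
      ring_nf
    rw [Metric.mem_closedBall, dist_comm, dist_eq, hpoint]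
    exact norm_sub_three_halves_mul_exp_le_one hz1.le hz2 (by exact_mod_cast hk)
end

section
/- Let k ≥ 2 and let G be the graph whose vertices are ordered pairs (i, j) with distinct i, j ∈ {1, ..., 2k}, where (a, b) and (c, d) are adjacent iff b = c or a = d. Then the set system {N_G(v) : v ∈ V(G)} has VC-dimension at most 3; i.e., no 4-element set of vertices is shattered by vertex neighborhoods. -/
def alonGraph (k : ℕ) : SimpleGraph {p : Fin (2 * k) × Fin (2 * k) // p.1 ≠ p.2} where
  Adj u v := u ≠ v ∧ (u.val.2 = v.val.1 ∨ u.val.1 = v.val.2)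
  symm := by
    constructor
    rintro u v ⟨h1, h2 | h2⟩
    · exact ⟨h1.symm, Or.inr h2.symm⟩
    · exact ⟨h1.symm, Or.inl h2.symm⟩
  loopless := by constructor; rintro u ⟨h1, _⟩; exact h1 rfl

section Aux

variable {k : ℕ} {S : Set {p : Fin (2 * k) × Fin (2 * k) // p.1 ≠ p.2}}

lemma mem_aux (v u : {p : Fin (2 * k) × Fin (2 * k) // p.1 ≠ p.2}) :
    u ∈ (alonGraph k).neighborSet v ↔
      (v ≠ u ∧ (v.val.2 = u.val.1 ∨ v.val.1 = u.val.2)) := Iff.rfl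

/-- No three points of a shattered set share the first coordinate. -/
lemma lemA (hsh : Shatters {N | ∃ v, N = (alonGraph k).neighborSet v} S)
    {u1 u2 u3 : {p : Fin (2 * k) × Fin (2 * k) // p.1 ≠ p.2}}
    (h1S : u1 ∈ S) (h2S : u2 ∈ S) (h3S : u3 ∈ S)
    (h12 : u1 ≠ u2) (h31 : u3 ≠ u1) (h32 : u3 ≠ u2)
    (ha2 : u2.val.1 = u1.val.1) (ha3 : u3.val.1 = u1.val.1) : False := by
  obtain ⟨A, ⟨v, rfl⟩, hA⟩ := hsh {u1, u2} (by rintro x (rfl | rfl) <;> assumption)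
  have e1 := Set.ext_iff.mp hA u1
  have e2 := Set.ext_iff.mp hA u2
  have e3 := Set.ext_iff.mp hA u3
  simp only [Set.mem_inter_iff, mem_aux, Set.mem_insert_iff, Set.mem_singleton_iff] at e1 e2 e3
  have m1 := (e1.mpr (by simp)).1
  have m2 := (e2.mpr (by simp)).1
  have hb : u1.val.2 ≠ u2.val.2 := fun h => h12 (Subtype.ext (Prod.ext ha2.symm h))
  have hv2 : v.val.2 = u1.val.1 := by
    rcases m1.2 with h | h
    · exact h
    · rcases m2.2 with h' | h'
      · rw [ha2] at h'; exact h'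
      · exact absurd (h ▸ h') hb
  have hveq : v = u3 := by
    by_contra hne
    exact (e3.mp ⟨⟨hne, Or.inl (hv2.trans ha3.symm)⟩, h3S⟩).elim (fun h => h31 h)
      (fun h => h32 h)
  have h2 : u3.val.2 = u1.val.1 := by rw [← hveq]; exact hv2
  exact u3.prop (ha3.trans h2.symm)

/-- No three points of a shattered set share the second coordinate. -/
lemma lemA' (hsh : Shatters {N | ∃ v, N = (alonGraph k).neighborSet v} S)
    {u1 u2 u3 : {p : Fin (2 * k) × Fin (2 * k) // p.1 ≠ p.2}}
    (h1S : u1 ∈ S) (h2S : u2 ∈ S) (h3S : u3 ∈ S)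
    (h12 : u1 ≠ u2) (h31 : u3 ≠ u1) (h32 : u3 ≠ u2)
    (hb2 : u2.val.2 = u1.val.2) (hb3 : u3.val.2 = u1.val.2) : False := by
  obtain ⟨A, ⟨v, rfl⟩, hA⟩ := hsh {u1, u2} (by rintro x (rfl | rfl) <;> assumption)
  have e1 := Set.ext_iff.mp hA u1
  have e2 := Set.ext_iff.mp hA u2
  have e3 := Set.ext_iff.mp hA u3
  simp only [Set.mem_inter_iff, mem_aux, Set.mem_insert_iff, Set.mem_singleton_iff] at e1 e2 e3
  have m1 := (e1.mpr (by simp)).1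
  have m2 := (e2.mpr (by simp)).1
  have ha : u1.val.1 ≠ u2.val.1 := fun h => h12 (Subtype.ext (Prod.ext h hb2.symm))
  have hv1 : v.val.1 = u1.val.2 := by
    rcases m1.2 with h | h
    · rcases m2.2 with h' | h'
      · exact absurd (h ▸ h') ha
      · rw [hb2] at h'; exact h'
    · exact h
  have hveq : v = u3 := by
    by_contra hne
    exact (e3.mp ⟨⟨hne, Or.inr (hv1.trans hb3.symm)⟩, h3S⟩).elim (fun h => h31 h)
      (fun h => h32 h)
  have h2 : u3.val.1 = u1.val.2 := by rw [← hveq]; exact hv1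
  exact u3.prop (h2.trans hb3.symm)

/-- Key lemma: two points share first coordinate, other two share second coordinate. -/
lemma keyLem (hsh : Shatters {N | ∃ v, N = (alonGraph k).neighborSet v} S)
    {u1 u2 u3 u4 : {p : Fin (2 * k) × Fin (2 * k) // p.1 ≠ p.2}}
    (h1S : u1 ∈ S) (h2S : u2 ∈ S) (h3S : u3 ∈ S) (h4S : u4 ∈ S)
    (h12 : u1 ≠ u2) (h31 : u3 ≠ u1) (h32 : u3 ≠ u2)
    (h41 : u4 ≠ u1) (h42 : u4 ≠ u2) (h43 : u4 ≠ u3)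
    (ha2 : u2.val.1 = u1.val.1) (hb4 : u4.val.2 = u3.val.2) : False := by
  by_cases hc : u3.val.1 = u1.val.1
  · exact lemA hsh h1S h2S h3S h12 h31 h32 ha2 hc
  obtain ⟨A, ⟨v, rfl⟩, hA⟩ :=
    hsh {u1, u2, u3} (by rintro x (rfl | rfl | rfl) <;> assumption)
  have e1 := Set.ext_iff.mp hA u1
  have e2 := Set.ext_iff.mp hA u2
  have e3 := Set.ext_iff.mp hA u3
  have e4 := Set.ext_iff.mp hA u4
  simp only [Set.mem_inter_iff, mem_aux, Set.mem_insert_iff, Set.mem_singleton_iff]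
    at e1 e2 e3 e4
  have m1 := (e1.mpr (by simp)).1
  have m2 := (e2.mpr (by simp)).1
  have m3 := (e3.mpr (by simp)).1
  have hb : u1.val.2 ≠ u2.val.2 := fun h => h12 (Subtype.ext (Prod.ext ha2.symm h))
  have hv2 : v.val.2 = u1.val.1 := by
    rcases m1.2 with h | h
    · exact h
    · rcases m2.2 with h' | h'
      · rw [ha2] at h'; exact h'
      · exact absurd (h ▸ h') hb
  have hv1 : v.val.1 = u3.val.2 := by
    rcases m3.2 with h | h
    · exact absurd (hv2.symm.trans h) (fun hh => hc hh.symm)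
    · exact h
  have hveq : v = u4 := by
    by_contra hne
    exact (e4.mp ⟨⟨hne, Or.inr (hv1.trans hb4.symm)⟩, h4S⟩).elim (fun h => h41 h)
      (fun h => h.elim (fun h' => h42 h') (fun h' => h43 h'))
  have h2 : u4.val.1 = u3.val.2 := by rw [← hveq]; exact hv1
  exact u4.prop (h2.trans hb4.symm)

end Aux

/-- The neighborhood set system of Alon's graph has VC-dimension at most 3:
no 4-element set of vertices is shattered. -/
theorem alonGraph_vcdim_le_three (k : ℕ) (hk : 2 ≤ k)
    (S : Finset {p : Fin (2 * k) × Fin (2 * k) // p.1 ≠ p.2}) (hS : S.card = 4) :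
    ¬ Shatters {N | ∃ v, N = (alonGraph k).neighborSet v} (S : Set _) := by
  intro hsh
  have hS' : S.card = 3 + 1 := hS
  rw [Finset.card_eq_succ] at hS'
  obtain ⟨u4, t, hnt, hins, ht⟩ := hS'
  rw [Finset.card_eq_three] at ht
  obtain ⟨u1, u2, u3, n12, n13, n23, rfl⟩ := ht
  subst hins
  simp only [Finset.mem_insert, Finset.mem_singleton, not_or] at hnt
  obtain ⟨n41, n42, n43⟩ := hnt
  have n41' : u1 ≠ u4 := fun h => n41 h.symm
  have n42' : u2 ≠ u4 := fun h => n42 h.symm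
  have n43' : u3 ≠ u4 := fun h => n43 h.symm
  have m1S : u1 ∈ (↑(insert u4 ({u1, u2, u3} : Finset _)) : Set _) := by simp
  have m2S : u2 ∈ (↑(insert u4 ({u1, u2, u3} : Finset _)) : Set _) := by simp
  have m3S : u3 ∈ (↑(insert u4 ({u1, u2, u3} : Finset _)) : Set _) := by simp
  have m4S : u4 ∈ (↑(insert u4 ({u1, u2, u3} : Finset _)) : Set _) := by simp
  obtain ⟨A, ⟨v, rfl⟩, hA⟩ := hsh _ (subset_refl _)
  have c1 := ((Set.ext_iff.mp hA u1).mpr m1S).1.2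
  have c2 := ((Set.ext_iff.mp hA u2).mpr m2S).1.2
  have c3 := ((Set.ext_iff.mp hA u3).mpr m3S).1.2
  have c4 := ((Set.ext_iff.mp hA u4).mpr m4S).1.2
  rcases c1 with h1 | h1 <;> rcases c2 with h2 | h2 <;> rcases c3 with h3 | h3 <;>
    rcases c4 with h4 | h4
  · exact lemA hsh m1S m2S m3S n12 n13.symm n23.symm (h2.symm.trans h1) (h3.symm.trans h1)
  · exact lemA hsh m1S m2S m3S n12 n13.symm n23.symm (h2.symm.trans h1) (h3.symm.trans h1)
  · exact lemA hsh m1S m2S m4S n12 n41 n42 (h2.symm.trans h1) (h4.symm.trans h1)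
  · exact keyLem hsh m1S m2S m3S m4S n12 n13.symm n23.symm n41 n42 n43
      (h2.symm.trans h1) (h4.symm.trans h3)
  · exact lemA hsh m1S m3S m4S n13 n41 n43 (h3.symm.trans h1) (h4.symm.trans h1)
  · exact keyLem hsh m1S m3S m2S m4S n13 n12.symm n23 n41 n43 n42
      (h3.symm.trans h1) (h4.symm.trans h2)
  · exact keyLem hsh m1S m4S m2S m3S n41' n12.symm n42' n13.symm n43' n23.symm
      (h4.symm.trans h1) (h3.symm.trans h2)
  · exact lemA' hsh m2S m3S m4S n23 n42 n43 (h3.symm.trans h2) (h4.symm.trans h2)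
  · exact lemA hsh m2S m3S m4S n23 n42 n43 (h3.symm.trans h2) (h4.symm.trans h2)
  · exact keyLem hsh m2S m3S m1S m4S n23 n12 n13 n42 n43 n41
      (h3.symm.trans h2) (h4.symm.trans h1)
  · exact keyLem hsh m2S m4S m1S m3S n42' n12 n41' n23.symm n43' n13.symm
      (h4.symm.trans h2) (h3.symm.trans h1)
  · exact lemA' hsh m1S m3S m4S n13 n41 n43 (h3.symm.trans h1) (h4.symm.trans h1)
  · exact keyLem hsh m3S m4S m1S m2S n43' n13 n41' n23 n42' n12.symm
      (h4.symm.trans h3) (h2.symm.trans h1)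
  · exact lemA' hsh m1S m2S m4S n12 n41 n42 (h2.symm.trans h1) (h4.symm.trans h1)
  · exact lemA' hsh m1S m2S m3S n12 n13.symm n23.symm (h2.symm.trans h1) (h3.symm.trans h1)
  · exact lemA' hsh m1S m2S m3S n12 n13.symm n23.symm (h2.symm.trans h1) (h3.symm.trans h1)
end
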